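/- Let (E, ℛ, τ) satisfy conditions (i), (ii), (iii). Then for every e ∈ E× and every nonempty finite subset 𝒮 ⊆ ℛ(e), the idempotent e(𝒮) = ∏_{R∈𝒮}(e − ⋁R) is nonzero in ℤ[E×]. -/

import Mathlib

set_option linter.unusedSectionVars false

/-- A *semilattice with zero*: a commutative idempotent semigroup with an
absorbing element `0`. -/
class SemilatticeWithZero (E : Type) extends CommSemigroup E, Zero E where
  mul_idem : ∀ e : E, e * e = e
  zero_mul : ∀ e : E, 0 * e = 0

namespace IndRes

variable {E : Type} [SemilatticeWithZero E]

/-- `single e c`, viewed in the semigroup algebra `ℤ[E]`. -/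
noncomputable def sgl (e : E) (c : ℤ) : MonoidAlgebra ℤ E := MonoidAlgebra.ofCoeff (Finsupp.single e c)

/-- Truncation map deleting the coefficient at `0`. -/
noncomputable def T (x : MonoidAlgebra ℤ E) : MonoidAlgebra ℤ E := x - sgl 0 (x.coeff 0)

lemma sgl_apply_self (e : E) (c : ℤ) : (sgl e c).coeff e = c := Finsupp.single_eq_same

lemma sgl_apply_ne (e d : E) (c : ℤ) (h : e ≠ d) : (sgl e c).coeff d = 0 := by
  simp [sgl, Finsupp.single_apply, h]

lemma sgl_add (e : E) (c d : ℤ) : sgl e (c + d) = sgl e c + sgl e d := by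
  unfold sgl; rw [Finsupp.single_add]; rfl

lemma sgl_sub (e : E) (c d : ℤ) : sgl e (c - d) = sgl e c - sgl e d := by
  unfold sgl; rw [Finsupp.single_sub]; rfl

lemma T_apply_zero (x : MonoidAlgebra ℤ E) : (T x).coeff 0 = 0 := by
  show ((x - sgl 0 (x.coeff 0) : MonoidAlgebra ℤ E)).coeff 0 = 0
  rw [MonoidAlgebra.coeff_sub, Finsupp.sub_apply, sgl_apply_self, sub_self]

/-- `ℤ[E^×]`, realized as the additive subgroup of the semigroup algebra
`ℤ[E]` consisting of the elements whose coefficient at `0` vanishes; it is the free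
`ℤ`-module with basis `E^× = E \ {0}`. -/
noncomputable def ZS (E : Type) [SemilatticeWithZero E] : AddSubgroup (MonoidAlgebra ℤ E) where
  carrier := {x | x.coeff 0 = 0}
  zero_mem' := rfl
  add_mem' := by
    intro a b ha hb
    simp only [Set.mem_setOf_eq] at *
    rw [MonoidAlgebra.coeff_add, Finsupp.add_apply, ha, hb, add_zero]
  neg_mem' := by
    intro a ha
    simp only [Set.mem_setOf_eq] at *
    rw [MonoidAlgebra.coeff_neg, Finsupp.neg_apply, ha, neg_zero]

/-- The integral semigroup ring `ℤ[E^×]`. -/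
abbrev ZE (E : Type) [SemilatticeWithZero E] : Type := ↥(ZS E)

lemma mem_ZS {x : MonoidAlgebra ℤ E} : x ∈ ZS E ↔ x.coeff 0 = 0 := Iff.rfl

lemma T_eq_self {x : MonoidAlgebra ℤ E} (h : x.coeff 0 = 0) : T x = x := by
  simp [T, h, sgl]

lemma T_add (a b : MonoidAlgebra ℤ E) : T (a + b) = T a + T b := by
  unfold T
  rw [show ((a + b).coeff 0) = a.coeff 0 + b.coeff 0 from Finsupp.add_apply a.coeff b.coeff 0, sgl_add]
  abel

lemma T_sub_sgl (x : MonoidAlgebra ℤ E) (m : ℤ) : T (x - sgl 0 m) = T x := by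
  unfold T
  have h : ((x - sgl 0 m : MonoidAlgebra ℤ E)).coeff 0 = x.coeff 0 - m := by
    rw [MonoidAlgebra.coeff_sub, Finsupp.sub_apply, sgl_apply_self]
  rw [h, sgl_sub]
  abel

lemma single_zero_mul (c : ℤ) (b : MonoidAlgebra ℤ E) :
    (sgl 0 c) * b = sgl 0 (((sgl 0 c * b : MonoidAlgebra ℤ E)).coeff 0) := by
  classical
  ext d
  by_cases hd : d = 0
  · subst hd; rw [sgl_apply_self]
  · rw [sgl_apply_ne 0 d _ (Ne.symm hd)]
    by_contra h
    have hmem : d ∈ ((sgl (0:E) c) * b).coeff.support := Finsupp.mem_support_iff.mpr h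
    have h2 := MonoidAlgebra.support_coeff_mul_subset (sgl (0:E) c) b hmem
    rw [Finset.mem_mul] at h2
    obtain ⟨a, ha, b', _, hab⟩ := h2
    have ha' : a = 0 := by
      have := Finsupp.support_single_subset (ha : a ∈ (Finsupp.single (0:E) c).support)
      simpa using this
    exact hd (by rw [← hab, ha', SemilatticeWithZero.zero_mul])

lemma T_mul_left (a b : MonoidAlgebra ℤ E) : T (T a * b) = T (a * b) := by
  have h1 : T a * b = a * b - (sgl 0 (a.coeff 0)) * b := by rw [T, sub_mul]
  rw [h1, single_zero_mul, T_sub_sgl]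

lemma T_mul_right (a b : MonoidAlgebra ℤ E) : T (a * T b) = T (a * b) := by
  rw [mul_comm a (T b), T_mul_left, mul_comm]

noncomputable instance : Mul (ZE E) :=
  ⟨fun x y => ⟨T (x.1 * y.1), T_apply_zero _⟩⟩

lemma ZE.val_mul (x y : ZE E) : (x * y).1 = T (x.1 * y.1) := rfl

noncomputable instance : NonUnitalCommRing (ZE E) :=
  { (inferInstance : AddCommGroup (ZE E)) with
    mul := (· * ·)
    left_distrib := by
      intro x y z
      apply Subtype.ext
      show T (x.1 * (y.1 + z.1)) = T (x.1 * y.1) + T (x.1 * z.1)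
      rw [mul_add, T_add]
    right_distrib := by
      intro x y z
      apply Subtype.ext
      show T ((x.1 + y.1) * z.1) = T (x.1 * z.1) + T (y.1 * z.1)
      rw [add_mul, T_add]
    zero_mul := by
      intro x
      apply Subtype.ext
      show T ((0 : MonoidAlgebra ℤ E) * x.1) = 0
      rw [zero_mul]
      simp [T, sgl]
    mul_zero := by
      intro x
      apply Subtype.ext
      show T (x.1 * (0 : MonoidAlgebra ℤ E)) = 0
      rw [mul_zero]
      simp [T, sgl]
    mul_assoc := by
      intro x y z
      apply Subtype.ext
      show T (T (x.1 * y.1) * z.1) = T (x.1 * T (y.1 * z.1))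
      rw [T_mul_left, T_mul_right, mul_assoc]
    mul_comm := by
      intro x y
      apply Subtype.ext
      show T (x.1 * y.1) = T (y.1 * x.1)
      rw [mul_comm] }

/-- The canonical image of `e ∈ E` in `ℤ[E^×]`: the basis element `e` if `e ≠ 0`,
and `0` if `e = 0`. -/
noncomputable def elt (e : E) : ZE E := ⟨T (sgl e 1), T_apply_zero _⟩

/-- Product of a (nonempty) finite family in a commutative non-unital ring, computed inside
the unitization.  For a nonempty index set this is the iterated product. -/
noncomputable def nprod {ι A : Type} [NonUnitalCommRing A] (s : Finset ι) (f : ι → A) : A :=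
  (∏ j ∈ s, (Unitization.inr (f j) : Unitization ℤ A)).snd

/-- The join `⋁_{j ∈ J} x_j = ∑_{∅ ≠ J' ⊆ J} (-1)^{|J'|+1} ∏_{j ∈ J'} x_j`
of a finite family of idempotents of a commutative non-unital ring. -/
noncomputable def rjoin {ι A : Type} [NonUnitalCommRing A] (s : Finset ι) (f : ι → A) : A :=
  ∑ t ∈ s.powerset.filter (fun t => t.Nonempty), ((-1 : ℤ) ^ (t.card + 1)) • nprod t f

/-- The join `⋁_{j ∈ J} e_j ∈ ℤ[E^×]` of a finite family of elements of `E`: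
`∑_{∅ ≠ J' ⊆ J} (-1)^{|J'|+1} ∏_{j ∈ J'} e_j`, where a product whose value in `E`
is `0` contributes `0`. -/
noncomputable def join {ι : Type} (s : Finset ι) (e : ι → E) : ZE E :=
  rjoin s (fun j => elt (e j))

/-- Iterated product of a nonempty list in a semigroup with zero (the value on the
empty list is the junk value `0`). -/
def listProd : List E → E
  | [] => 0
  | [a] => a
  | a :: b :: l => a * listProd (b :: l)

/-- The product `∏_{j ∈ s} f j ∈ E` of a (nonempty) finite family. -/
noncomputable def eprod {ι : Type} (s : Finset ι) (f : ι → E) : E :=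
  listProd (s.toList.map f)

/-- The support `E(x)` of `x ∈ ℤ[E^×]`: the finite set of elements of `E^×` appearing
with a nonzero coefficient in the reduced form of `x`. -/
noncomputable def supp (x : ZE E) : Finset E := x.1.coeff.support

section Action

variable {Γ : Type} [Group Γ] [MulAction Γ E]

/-- The induced action of `g ∈ Γ` on `ℤ[E^×]`: the `ℤ`-linear map sending a basis
element `e ∈ E^×` to `g • e`.  (When the action fixes `0` — which is the case for an
action by semigroup automorphisms fixing `0` — the truncation `T` is a no-op, and this
is the automorphism of `ℤ[E^×]` induced by `τ_g`.) -/
noncomputable def act (g : Γ) (x : ZE E) : ZE E :=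
  ⟨T (MonoidAlgebra.ofCoeff (Finsupp.mapDomain (fun e : E => g • e) x.1.coeff)), T_apply_zero _⟩

end Action



attribute [local instance] Classical.propDecidable

variable {E : Type} [SemilatticeWithZero E]

/-- A Γ-semilattice structure: the group acts by semigroup automorphisms fixing `0`. -/
def IsGammaSL (Γ E : Type) [Group Γ] [SemilatticeWithZero E] [MulAction Γ E] : Prop :=
  (∀ (g : Γ) (x y : E), g • (x * y) = (g • x) * (g • y)) ∧ (∀ g : Γ, g • (0 : E) = 0)

/-- The set `E_φ`. -/
def Ephi {D : Type} [NonUnitalCommRing D] (φ : ZE E →ₙ+* D) : Set (ZE E) :=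
  { x | ∃ (e : E) (J : Finset E), e ≠ 0 ∧ (∀ f ∈ J, f ≠ 0 ∧ f * e = f ∧ f ≠ e) ∧
      x = elt e - join J (fun f => f) ∧
      φ (elt e) = rjoin J (fun f => φ (elt f)) }

/-- `R` is a finite cover for `e ∈ E^×`. -/
def IsCover (e : E) (R : Finset E) : Prop :=
  (∀ f ∈ R, f ≠ 0 ∧ f * e = f) ∧
  ∀ f' : E, f' ≠ 0 → f' * e = f' → ∃ f ∈ R, f' * f ≠ 0

/-- `ℛ` is a collection of finite covers for `E`. -/
def CovSystem (ℛ : E → Set (Finset E)) : Prop :=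
  ∀ e : E, e ≠ 0 → ∀ R ∈ ℛ e, IsCover e R

/-- Condition (i). -/
def CondI (ℛ : E → Set (Finset E)) : Prop :=
  ∀ d e : E, d ≠ 0 → e ≠ 0 → d * e ≠ 0 → ∀ R ∈ ℛ e,
    d * e ∈ (R.image (fun f => d * f)).erase 0 ∨ (R.image (fun f => d * f)).erase 0 ∈ ℛ (d * e)

/-- Condition (ii). -/
def CondII (ℛ : E → Set (Finset E)) : Prop :=
  ∀ e : E, e ≠ 0 → ∀ r : ℕ, 0 < r → ∀ Rs : Fin r → Finset E,
    Function.Injective Rs → (∀ i, Rs i ∈ ℛ e) → ∀ ε : Fin r → E,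
    (∀ i, ε i ∈ supp (join (Rs i) (fun f => f))) → ∀ j : Fin r,
      (if r = 1 then e else eprod (Finset.univ.erase j) ε) ≠ 0 →
      eprod Finset.univ ε * (if r = 1 then e else eprod (Finset.univ.erase j) ε)
          = eprod Finset.univ ε ∧
      eprod Finset.univ ε ≠ (if r = 1 then e else eprod (Finset.univ.erase j) ε)

/-- Condition (iii). -/
def CondIII (Γ : Type) [Group Γ] [MulAction Γ E] (ℛ : E → Set (Finset E)) : Prop :=
  ∀ (g : Γ) (e : E), e ≠ 0 →
    (fun R : Finset E => R.image (fun f => g • f)) '' (ℛ e) = ℛ (g • e)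

/-- `e(𝒮) = ∏_{R ∈ 𝒮} (e - ⋁R) ∈ ℤ[E^×]`. -/
noncomputable def eS (e : E) (S : Finset (Finset E)) : ZE E :=
  nprod S (fun R => elt e - join R (fun f => f))

/-- `E(E,ℛ) = {e(𝒮) : e ∈ E^×, 𝒮 ⊆ ℛ(e) nonempty finite} ∪ {0} ⊆ ℤ[E^×]`. -/
def EER (ℛ : E → Set (Finset E)) : Set (ZE E) :=
  {x | ∃ (e : E) (S : Finset (Finset E)), e ≠ 0 ∧ S.Nonempty ∧ ↑S ⊆ ℛ e ∧ x = eS e S} ∪ {0}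

/-- `R(𝒮,R̃) = {e(𝒮 ∪ {R̃})} ∪ {f ⬝ e(𝒮) : f ∈ R̃, f ⬝ e(𝒮) ≠ 0}`. -/
noncomputable def RSR (e : E) (S : Finset (Finset E)) (Rt : Finset E) : Finset (ZE E) :=
  insert (eS e (insert Rt S)) ((Rt.image (fun f => elt f * eS e S)).erase 0)

/-- The collection of finite covers `ℛ(E,ℛ)` on `E(E,ℛ)`, assigning to an element
`x = e(𝒮)` of `E(E,ℛ)^×` the covers `R(𝒮,R̃)`, `R̃ ∈ ℛ(e) ∖ 𝒮` (over all ways of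
presenting `x` in the form `e(𝒮)`). -/
def RER (ℛ : E → Set (Finset E)) (x : ZE E) : Set (Finset (ZE E)) :=
  {C | ∃ (e : E) (S : Finset (Finset E)) (Rt : Finset E),
        e ≠ 0 ∧ S.Nonempty ∧ ↑S ⊆ ℛ e ∧ Rt ∈ ℛ e ∧ Rt ∉ S ∧ x = eS e S ∧ C = RSR e S Rt}

/-- The `ℤ`-linear map `ℤ[E₁^×] → ℤ[E₂^×]` induced by a map `θ` from `E₁` to `ℤ[E₂^×]`,
sending a basis element `e' ∈ E₁^×` to `θ e'`. -/
noncomputable def indMap {E₁ E₂ : Type} [SemilatticeWithZero E₁] [SemilatticeWithZero E₂]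
    (θ : E₁ → ZE E₂) : ZE E₁ →ₗ[ℤ] ZE E₂ :=
  (Finsupp.linearCombination ℤ θ).comp ((MonoidAlgebra.coeffAddEquiv.toAddMonoidHom.comp (ZS E₁).subtype).toIntLinearMap)

/-- `(E₁, ℛ₁, θ)` is a realization of the construction `(E(E,ℛ), ℛ(E,ℛ))`:
`θ` identifies the abstract Γ-semilattice `E₁` with `E(E,ℛ) ⊆ ℤ[E^×]` (equivariantly,
multiplicatively and preserving `0`), and `ℛ₁` corresponds to `ℛ(E,ℛ)` under this
identification. -/
def Realizes {Γ E E₁ : Type} [Group Γ] [SemilatticeWithZero E] [MulAction Γ E]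
    [SemilatticeWithZero E₁] [MulAction Γ E₁]
    (ℛ : E → Set (Finset E)) (ℛ₁ : E₁ → Set (Finset E₁)) (θ : E₁ → ZE E) : Prop :=
  Function.Injective θ ∧ Set.range θ = EER ℛ ∧ θ 0 = 0 ∧
  (∀ x y : E₁, θ (x * y) = θ x * θ y) ∧
  (∀ (g : Γ) (x : E₁), θ (g • x) = act g (θ x)) ∧
  (∀ e' : E₁, e' ≠ 0 → ∀ C : Finset E₁, C ∈ ℛ₁ e' ↔ C.image θ ∈ RER ℛ (θ e'))

end IndRes

open IndRes

/-!
Condition (ii) for a single cover `R ∈ ℛ(e)` says that every element in the support of `⋁R`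
lies strictly below `e`. Hence each factor `e - ⋁R` has coefficient `1` at `e` and is supported
on `{f : f ≤ e}`. On elements supported below `e` the coefficient at `e` is multiplicative,
because `a * b = e` with `a ≤ e` forces `a = e`. So `e(𝒮)` has coefficient `1` at `e`.
-/

namespace IndRes

variable {E : Type} [SemilatticeWithZero E]

lemma eq_of_le_of_mul_eq {a b e : E} (hae : a * e = a) (hab : a * b = e) : a = e := by
  calc a = a * e := hae.symm
    _ = a * (a * b) := by rw [hab]
    _ = a * b := by rw [← mul_assoc, SemilatticeWithZero.mul_idem]
    _ = e := hab

lemma coeff_mul_of_ne_zero (x y : ZE E) {f : E} (hf : f ≠ 0) :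
    (x * y).1.coeff f = (x.1 * y.1).coeff f := by
  rw [ZE.val_mul, T, MonoidAlgebra.coeff_sub, Finsupp.sub_apply,
    sgl_apply_ne 0 f _ (Ne.symm hf), sub_zero]

lemma val_elt {e : E} (he : e ≠ 0) : (elt e).1 = sgl e 1 :=
  T_eq_self (sgl_apply_ne e 0 1 he)

def SupportedBelow (e : E) (x : ZE E) : Prop := ∀ f ∈ supp x, f * e = f

lemma SupportedBelow.mul_left {e : E} {y : ZE E} (hy : SupportedBelow e y) (x : ZE E) :
    SupportedBelow e (x * y) := by
  classical
  intro f hf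
  have hf0 : f ≠ 0 := by
    rintro rfl
    exact Finsupp.mem_support_iff.mp hf (x * y).2
  have hmem : f ∈ (x.1 * y.1).coeff.support := by
    rw [Finsupp.mem_support_iff, ← coeff_mul_of_ne_zero x y hf0]
    exact Finsupp.mem_support_iff.mp hf
  obtain ⟨a, ha, b, hb, rfl⟩ :=
    Finset.mem_mul.mp (MonoidAlgebra.support_coeff_mul_subset x.1 y.1 hmem)
  rw [mul_assoc, hy b hb]

lemma SupportedBelow.coeff_mul {e : E} (he : e ≠ 0) {x y : ZE E} (hx : SupportedBelow e x)
    (hy : SupportedBelow e y) : (x * y).1.coeff e = x.1.coeff e * y.1.coeff e := by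
  classical
  have hx' a (ha : x.1.coeff a ≠ 0) : a * e = a := hx a (Finsupp.mem_support_iff.mpr ha)
  have hy' b (hb : y.1.coeff b ≠ 0) : b * e = b := hy b (Finsupp.mem_support_iff.mpr hb)
  rw [coeff_mul_of_ne_zero x y he, MonoidAlgebra.coeff_mul,
    Finsupp.sum_eq_single e (fun a ha hae => ?off_diag_left) (by simp),
    Finsupp.sum_eq_single e (fun b hb hbe => ?off_diag_right) (by simp),
    if_pos (SemilatticeWithZero.mul_idem e)]
  case off_diag_left =>
    exact Finset.sum_eq_zero fun b _ => if_neg fun h => hae (eq_of_le_of_mul_eq (hx' a ha) h)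
  case off_diag_right =>
    exact if_neg fun h => hbe (eq_of_le_of_mul_eq (hy' b hb) (mul_comm b e ▸ h))

lemma SupportedBelow.sub {e : E} {x y : ZE E} (hx : SupportedBelow e x)
    (hy : SupportedBelow e y) : SupportedBelow e (x - y) := by
  classical
  intro f hf
  rcases Finset.mem_union.mp (Finsupp.support_sub hf) with hf | hf
  exacts [hx f hf, hy f hf]

lemma supportedBelow_elt_self {e : E} (he : e ≠ 0) : SupportedBelow e (elt e) := by
  intro f hf
  rw [supp, val_elt he, sgl, MonoidAlgebra.coeff_ofCoeff] at hf
  rw [Finset.mem_singleton.mp (Finsupp.support_single_subset hf), SemilatticeWithZero.mul_idem]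

lemma eprod_univ_fin_one (ε : Fin 1 → E) : eprod Finset.univ ε = ε 0 := by
  rw [eprod, show (Finset.univ : Finset (Fin 1)) = {0} from rfl, Finset.toList_singleton]
  rfl

lemma CondII.lt_of_mem_supp_join {ℛ : E → Set (Finset E)} (h2 : CondII ℛ) {e : E} (he : e ≠ 0)
    {R : Finset E} (hR : R ∈ ℛ e) {ε : E} (hε : ε ∈ supp (join R fun f => f)) :
    ε * e = ε ∧ ε ≠ e := by
  have key := h2 e he 1 one_pos (fun _ => R) (Function.injective_of_subsingleton _)
    (fun _ => hR) (fun _ => ε) (fun _ => hε) 0 (by simpa using he)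
  simpa only [if_true, eprod_univ_fin_one] using key

lemma coeff_sub_join_self {ℛ : E → Set (Finset E)} (h2 : CondII ℛ) {e : E} (he : e ≠ 0)
    {R : Finset E} (hR : R ∈ ℛ e) : (elt e - join R fun f => f).1.coeff e = 1 := by
  have hjoin : (join R fun f => f).1.coeff e = 0 :=
    Finsupp.notMem_support_iff.mp fun h => (h2.lt_of_mem_supp_join he hR h).2 rfl
  rw [AddSubgroup.coe_sub, MonoidAlgebra.coeff_sub, Finsupp.sub_apply, val_elt he,
    sgl_apply_self, hjoin, sub_zero]

lemma supportedBelow_sub_join {ℛ : E → Set (Finset E)} (h2 : CondII ℛ) {e : E} (he : e ≠ 0)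
    {R : Finset E} (hR : R ∈ ℛ e) : SupportedBelow e (elt e - join R fun f => f) :=
  (supportedBelow_elt_self he).sub fun _ hε => (h2.lt_of_mem_supp_join he hR hε).1

section NonUnitalProduct

variable {ι A : Type} [NonUnitalCommRing A]

lemma fst_prod_inr {s : Finset ι} (hs : s.Nonempty) (f : ι → A) :
    (∏ j ∈ s, (Unitization.inr (f j) : Unitization ℤ A)).fst = 0 := by
  classical
  obtain ⟨a, ha⟩ := hs
  rw [← Finset.mul_prod_erase s _ ha, Unitization.fst_mul, Unitization.fst_inr, zero_mul]

lemma nprod_singleton (a : ι) (f : ι → A) : nprod {a} f = f a := by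
  simp [nprod]

lemma nprod_cons (a : ι) {s : Finset ι} (h : a ∉ s) (hs : s.Nonempty) (f : ι → A) :
    nprod (Finset.cons a s h) f = f a * nprod s f := by
  rw [nprod, nprod, Finset.prod_cons, Unitization.snd_mul, Unitization.fst_inr,
    Unitization.snd_inr, fst_prod_inr hs f, zero_smul, zero_smul, zero_add, zero_add]

lemma nprod_induction (p : A → Prop) (hmul : ∀ a b, p a → p b → p (a * b)) {s : Finset ι}
    (hs : s.Nonempty) (f : ι → A) (hf : ∀ i ∈ s, p (f i)) : p (nprod s f) := by
  induction hs using Finset.Nonempty.cons_induction with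
  | singleton a => simpa [nprod_singleton] using hf a (Finset.mem_singleton_self a)
  | cons a s ha hs ih =>
    rw [nprod_cons a ha hs]
    simp only [Finset.mem_cons, forall_eq_or_imp] at hf
    exact hmul _ _ hf.1 (ih hf.2)

end NonUnitalProduct

lemma coeff_eS_self {ℛ : E → Set (Finset E)} (h2 : CondII ℛ) {e : E} (he : e ≠ 0)
    {S : Finset (Finset E)} (hS : S.Nonempty) (hSℛ : ↑S ⊆ ℛ e) : (eS e S).1.coeff e = 1 := by
  refine (nprod_induction (fun x : ZE E => x.1.coeff e = 1 ∧ SupportedBelow e x) ?_ hS _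
    fun R hR => ⟨coeff_sub_join_self h2 he (hSℛ hR), supportedBelow_sub_join h2 he (hSℛ hR)⟩).1
  rintro x y ⟨hx1, hx⟩ ⟨hy1, hy⟩
  exact ⟨by rw [hx.coeff_mul he hy, hx1, hy1, one_mul], hy.mul_left x⟩

end IndRes

open IndRes

theorem statement_8_general {E : Type} [SemilatticeWithZero E]
    (ℛ : E → Set (Finset E))
    (h2 : CondII ℛ) :
    ∀ e : E, e ≠ 0 → ∀ S : Finset (Finset E), S.Nonempty → ↑S ⊆ ℛ e → eS e S ≠ 0 := by
  intro e he S hS hSℛ h0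
  have hcoeff := coeff_eS_self h2 he hS hSℛ
  rw [h0] at hcoeff
  exact zero_ne_one hcoeff

theorem statement_8 {E Γ : Type} [SemilatticeWithZero E] [Group Γ] [MulAction Γ E]
    (hact : IsGammaSL Γ E) (ℛ : E → Set (Finset E))
    (hcov : CovSystem ℛ) (h1 : CondI ℛ) (h2 : CondII ℛ) (h3 : CondIII Γ ℛ) :
    ∀ e : E, e ≠ 0 → ∀ S : Finset (Finset E), S.Nonempty → ↑S ⊆ ℛ e → eS e S ≠ 0 :=
  statement_8_general ℛ h2
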